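/- arXiv:2101.10147 — 2 statements merged into one kernel-verified Lean document; each statement's English description precedes it below -/
import Mathlib

section
/- For all natural numbers a, the integral ∫_0^∞ e^{-x} L_a(x)^2 dx equals 1, where L_a is the simple Laguerre polynomial of degree a. -/
/-!
Write `L_a(x) = ∑ c_i x^i` with `c_i = (-1)^i C(a,i) / i!`. Expanding one factor of `L_a²` gives
`∫ e^{-x} L_a² = ∑_j c_j ∫ e^{-x} L_a(x) x^j`. Since `∫₀^∞ e^{-x} x^n = n!`, the moment
`∫ e^{-x} L_a(x) x^j = ∑_i (-1)^i C(a,i) (i+j)!/i!` is `(-1)^a` times the `a`-th forward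
difference, at `1`, of the rising factorial `r ↦ r (r+1) ⋯ (r+j-1)`, a monic polynomial of
degree `j`. So it vanishes for `j < a` and equals `(-1)^a a!` for `j = a`, and the sum collapses
to `c_a (-1)^a a! = 1`.
-/

/-- The simple Laguerre polynomial `L_a(x) = ∑_{α=0}^{a} (-1)^α C(a,α) x^α / α!`. -/
noncomputable def laguerre (a : ℕ) (x : ℝ) : ℝ :=
  ∑ α ∈ Finset.range (a + 1), (-1 : ℝ) ^ α * (Nat.choose a α : ℝ) * x ^ α / (Nat.factorial α : ℝ)

open MeasureTheory Set Finset Nat Polynomial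
open scoped fwdDiff

theorem sum_range_neg_one_pow_mul_choose_mul_eq_fwdDiff_iter {R : Type*} [CommRing R]
    (f : R → R) (n : ℕ) (y : R) :
    ∑ k ∈ range (n + 1), (-1) ^ k * n.choose k * f (y + k) = (-1) ^ n * Δ_[1] ^[n] f y := by
  rw [fwdDiff_iter_eq_sum_shift, mul_sum]
  refine sum_congr rfl fun k hk => ?_
  have hsign : (-1 : R) ^ n * (-1) ^ (n - k) = (-1) ^ k := by
    obtain ⟨m, rfl⟩ := Nat.exists_eq_add_of_le (mem_range_succ_iff.mp hk)
    rw [Nat.add_sub_cancel_left, pow_add, mul_assoc, ← pow_add, ← two_mul, pow_mul]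
    simp
  simp only [zsmul_eq_mul, nsmul_one, Int.cast_mul, Int.cast_pow, Int.cast_neg, Int.cast_one,
    Int.cast_natCast]
  linear_combination (n.choose k * f (y + k)) * hsign.symm

theorem integrableOn_exp_neg_mul_pow (n : ℕ) :
    IntegrableOn (fun x : ℝ => Real.exp (-x) * x ^ n) (Ioi 0) := by
  refine (Real.GammaIntegral_convergent (s := n + 1) (by positivity)).congr_fun
    (fun x _ => ?_) measurableSet_Ioi
  simp only [add_sub_cancel_right, Real.rpow_natCast]

theorem integral_exp_neg_mul_pow (n : ℕ) :
    ∫ x in Ioi (0 : ℝ), Real.exp (-x) * x ^ n = n ! := by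
  rw [← Real.Gamma_nat_eq_factorial, Real.Gamma_eq_integral (by positivity)]
  refine setIntegral_congr_fun measurableSet_Ioi fun x _ => ?_
  simp only [add_sub_cancel_right, Real.rpow_natCast]

noncomputable def laguerreCoeff (a i : ℕ) : ℝ := (-1) ^ i * a.choose i / i !

theorem laguerre_eq_sum (a : ℕ) (x : ℝ) :
    laguerre a x = ∑ i ∈ range (a + 1), laguerreCoeff a i * x ^ i :=
  sum_congr rfl fun i _ => by rw [laguerreCoeff, mul_div_right_comm]

theorem laguerreCoeff_mul_factorial_add (a i j : ℕ) :
    laguerreCoeff a i * (i + j)!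
      = (-1) ^ i * a.choose i * (ascPochhammer ℝ j).eval (1 + i : ℝ) := by
  rw [laguerreCoeff, ← factorial_mul_ascPochhammer, add_comm (1 : ℝ)]
  field_simp

theorem exp_neg_mul_laguerre_mul_pow (a j : ℕ) (x : ℝ) :
    Real.exp (-x) * (laguerre a x * x ^ j)
      = ∑ i ∈ range (a + 1), laguerreCoeff a i * (Real.exp (-x) * x ^ (i + j)) := by
  simp only [laguerre_eq_sum, sum_mul, mul_sum, pow_add]
  exact sum_congr rfl fun i _ => by ring

theorem integrableOn_exp_neg_mul_laguerre_mul_pow (a j : ℕ) :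
    IntegrableOn (fun x => Real.exp (-x) * (laguerre a x * x ^ j)) (Ioi 0) := by
  simp only [exp_neg_mul_laguerre_mul_pow]
  exact integrable_finsetSum _ fun i _ => (integrableOn_exp_neg_mul_pow (i + j)).const_mul _

theorem integral_exp_neg_mul_laguerre_mul_pow (a j : ℕ) :
    ∫ x in Ioi (0 : ℝ), Real.exp (-x) * (laguerre a x * x ^ j)
      = (-1) ^ a * Δ_[1] ^[a] (ascPochhammer ℝ j).eval 1 := by
  simp only [exp_neg_mul_laguerre_mul_pow]
  rw [integral_finsetSum _ fun i _ => (integrableOn_exp_neg_mul_pow (i + j)).const_mul _,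
    ← sum_range_neg_one_pow_mul_choose_mul_eq_fwdDiff_iter]
  refine sum_congr rfl fun i _ => ?_
  rw [integral_const_mul, integral_exp_neg_mul_pow, laguerreCoeff_mul_factorial_add]

theorem integral_exp_neg_mul_laguerre_mul_pow_of_lt {a j : ℕ} (h : j < a) :
    ∫ x in Ioi (0 : ℝ), Real.exp (-x) * (laguerre a x * x ^ j) = 0 := by
  rw [integral_exp_neg_mul_laguerre_mul_pow,
    fwdDiff_iter_eq_zero_of_degree_lt (by rwa [ascPochhammer_natDegree])]
  simp

theorem integral_exp_neg_mul_laguerre_mul_pow_self (a : ℕ) :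
    ∫ x in Ioi (0 : ℝ), Real.exp (-x) * (laguerre a x * x ^ a) = (-1) ^ a * a ! := by
  have h := (ascPochhammer ℝ a).fwdDiff_iter_degree_eq_factorial
  rw [ascPochhammer_natDegree, (monic_ascPochhammer ℝ a).leadingCoeff] at h
  rw [integral_exp_neg_mul_laguerre_mul_pow, h]
  simp

theorem laguerre_orthonormal_self (a : ℕ) :
    ∫ x in Set.Ioi (0 : ℝ), Real.exp (-x) * (laguerre a x) ^ 2 = 1 := by
  have hexpand (x : ℝ) : Real.exp (-x) * laguerre a x ^ 2
      = ∑ j ∈ range (a + 1), laguerreCoeff a j * (Real.exp (-x) * (laguerre a x * x ^ j)) := by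
    rw [sq]
    nth_rw 2 [laguerre_eq_sum]
    rw [mul_sum, mul_sum]
    exact sum_congr rfl fun j _ => by ring
  simp only [hexpand]
  rw [integral_finsetSum _ fun j _ => (integrableOn_exp_neg_mul_laguerre_mul_pow a j).const_mul _,
    sum_range_succ, sum_eq_zero fun j hj => ?lower, zero_add, integral_const_mul,
    integral_exp_neg_mul_laguerre_mul_pow_self, laguerreCoeff, choose_self, cast_one, mul_one]
  case lower =>
    rw [integral_const_mul, integral_exp_neg_mul_laguerre_mul_pow_of_lt (mem_range.mp hj),
      mul_zero]
  field_simp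
  rw [← pow_mul, pow_mul', neg_one_sq, one_pow]
end

section
/- The Franel numbers f_k = Σ_{j=0}^{k} C(k,j)^3 satisfy the recurrence (k+1)² f_{k+1} = (7k² + 7k + 2) f_k + 8 k² f_{k-1} for k ≥ 1, with f_0 = 1 and f_1 = 2. -/
/-!
Creative telescoping (Zeilberger). With
`F n k = (n+1)² C(n+1,k)³ - (7n²+7n+2) C(n,k)³ - 8n² C(n-1,k)³`,
one has `F n k = G n (k+1) - G n k` for the certificate `G = franelCert`,
`G n (k+1) = (4k³/n + 27nk - 14n² - 5n - 18k² + 3k - 1) C(n,k)³`, `G n 0 = 0`.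
Since `C(n+1,k+1)`, `C(n,k+1)` and `C(n-1,k+1)` are rational multiples of `C(n,k)`, this is an
identity of rational functions in `n` and `k`. Summing over `k` telescopes to `G n (n+2) = 0`.
-/

/-- The Franel numbers. -/
def franel (k : ℕ) : ℕ := ∑ j ∈ Finset.range (k + 1), (Nat.choose k j) ^ 3

open Finset

theorem Nat.cast_succ_mul_choose_succ {R : Type*} [CommRing R] (n k : ℕ) :
    ((k : R) + 1) * n.choose (k + 1) = ((n : R) - k) * n.choose k := by
  rcases le_or_gt k n with h | h
  · have := congrArg (Nat.cast : ℕ → R) (Nat.choose_succ_right_eq n k)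
    push_cast [h] at this
    linear_combination this
  · simp [Nat.choose_eq_zero_of_lt h, Nat.choose_eq_zero_of_lt (h.trans k.lt_succ_self)]

theorem Nat.cast_mul_choose_pred {R : Type*} [CommRing R] {n : ℕ} (hn : n ≠ 0) (k : ℕ) :
    (n : R) * (n - 1).choose k = ((n : R) - k) * n.choose k := by
  obtain ⟨m, rfl⟩ := Nat.exists_eq_add_one_of_ne_zero hn
  rcases le_or_gt k (m + 1) with h | h
  · have := congrArg (Nat.cast : ℕ → R) (Nat.choose_mul_succ_eq m k)
    push_cast [h] at this
    simpa [mul_comm] using this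
  · simp [Nat.choose_eq_zero_of_lt h, Nat.choose_eq_zero_of_lt (by omega : m < k)]

def franelCert (n : ℕ) : ℕ → ℚ
  | 0 => 0
  | k + 1 => (4 * k ^ 3 / n + 27 * n * k - 14 * n ^ 2 - 5 * n - 18 * k ^ 2 + 3 * k - 1) *
      n.choose k ^ 3

theorem franelCert_succ_sub {n : ℕ} (hn : n ≠ 0) (k : ℕ) :
    franelCert n (k + 1) - franelCert n k =
      ((n : ℚ) + 1) ^ 2 * (n + 1).choose k ^ 3 - (7 * n ^ 2 + 7 * n + 2) * n.choose k ^ 3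
        - 8 * n ^ 2 * (n - 1).choose k ^ 3 := by
  cases k with
  | zero => simp only [franelCert, Nat.choose_zero_right]; push_cast; ring
  | succ k =>
    have hn' : (n : ℚ) ≠ 0 := Nat.cast_ne_zero.2 hn
    have hb : (n.choose (k + 1) : ℚ) = (n - k) * n.choose k / (k + 1) := by
      rw [eq_div_iff (by positivity), mul_comm, Nat.cast_succ_mul_choose_succ]
    have hd : ((n - 1).choose (k + 1) : ℚ) = (n - (k + 1)) * n.choose (k + 1) / n := by
      rw [eq_div_iff hn', mul_comm, Nat.cast_mul_choose_pred hn]; push_cast; ring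
    simp only [franelCert, Nat.choose_succ_succ' n k]
    push_cast
    rw [hd, hb]
    field_simp
    ring

theorem franel_eq_sum_range {n N : ℕ} (h : n + 1 ≤ N) :
    franel n = ∑ k ∈ range N, n.choose k ^ 3 :=
  sum_subset (range_subset_range.2 h) fun k _ hk => by
    simp [Nat.choose_eq_zero_of_lt (by simpa using hk : n < k)]

theorem franelCert_eq_zero_of_lt {n k : ℕ} (h : n < k) : franelCert n (k + 1) = 0 := by
  simp [franelCert, Nat.choose_eq_zero_of_lt h]

theorem cast_franel_recurrence {n : ℕ} (hn : n ≠ 0) :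
    ((n : ℚ) + 1) ^ 2 * franel (n + 1) =
      (7 * n ^ 2 + 7 * n + 2) * franel n + 8 * n ^ 2 * franel (n - 1) := by
  have telescope : ∑ k ∈ range (n + 2), (franelCert n (k + 1) - franelCert n k) = 0 := by
    rw [sum_range_sub, franelCert_eq_zero_of_lt n.lt_succ_self, franelCert, sub_zero]
  simp only [franelCert_succ_sub hn, sum_sub_distrib, ← mul_sum] at telescope
  rw [franel_eq_sum_range (N := n + 2) le_rfl, franel_eq_sum_range (N := n + 2) (by omega),
    franel_eq_sum_range (N := n + 2) (by omega)]
  push_cast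
  linear_combination telescope

theorem franel_recurrence :
    franel 0 = 1 ∧ franel 1 = 2 ∧
    ∀ k : ℕ, 1 ≤ k →
      (k + 1) ^ 2 * franel (k + 1) =
        (7 * k ^ 2 + 7 * k + 2) * franel k + 8 * k ^ 2 * franel (k - 1) := by
  refine ⟨rfl, rfl, fun k hk => ?_⟩
  exact_mod_cast cast_franel_recurrence (Nat.one_le_iff_ne_zero.1 hk)
end
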